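/- Assuming the flatten-extract, put and comonad axioms, the top path of the flatten-expand axiom equals the top path of its bialgebraic formulation: for all x ∈ M M A, μ ∘ (M(M μ)) ∘ (M(M put)) ∘ (M strength) ∘ (M⟨id, δ∘ε⟩) ∘ δ applied to x equals (M μ) ∘ μ ∘ (M(M put)) ∘ (M strength) ∘ (M⟨M ε, ε⟩) ∘ δ ∘ (M δ) applied to x. -/

import Mathlib

/-! Both composites agree by naturality and one counit law. Naturality of `μ` rewrites
`μ ∘ M (M μ)` as `M μ ∘ μ`, and naturality of `δ` rewrites `δ ∘ M δ` as `M (M δ) ∘ δ`, so both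
sides become `M μ ∘ μ ∘ M g ∘ δ` for maps `g` that agree after precomposing the right one with
`M δ`: there `M ε ∘ M δ = id` by the counit law and `ε ∘ M δ = δ ∘ ε` by naturality of `ε`. -/

section NaturalTransformations

variable {M : Type → Type} (map : {A B : Type} → (A → B) → M A → M B)

theorem map_map_of_leftInverse
    (mapId : ∀ (A : Type) (x : M A), map (id : A → A) x = x)
    (mapComp : ∀ (A B C : Type) (f : B → C) (g : A → B) (x : M A),
      map f (map g x) = map (f ∘ g) x)
    {A B : Type} {f : A → B} {g : B → A} (h : Function.LeftInverse g f) (x : M A) :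
    map g (map f x) = x := by
  rw [mapComp, h.comp_eq_id, mapId]

theorem mu_map_map_comp {mu : {A : Type} → M (M A) → M A}
    (mapComp : ∀ (A B C : Type) (f : B → C) (g : A → B) (x : M A),
      map f (map g x) = map (f ∘ g) x)
    (muNat : ∀ (A B : Type) (f : A → B) (x : M (M A)), mu (map (map f) x) = map f (mu x))
    {A B C : Type} (f : B → C) (g : A → M B) (x : M A) :
    mu (map (fun a => map f (g a)) x) = map f (mu (map g x)) := by
  rw [← muNat, mapComp]
  rfl

end NaturalTransformations

theorem flatten_expand_bialgebra_equiv_general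
    (M : Type → Type)
    (map : {A B : Type} → (A → B) → M A → M B)
    (mu : {A : Type} → M (M A) → M A)
    (eps : {A : Type} → M A → A)
    (delta : {A : Type} → M A → M (M A))
    (put : {A : Type} → M A × A → M A)
    -- functor axioms
    (mapId : ∀ (A : Type) (x : M A), map (id : A → A) x = x)
    (mapComp : ∀ (A B C : Type) (f : B → C) (g : A → B) (x : M A),
      map f (map g x) = map (f ∘ g) x)
    -- naturality
    (muNat : ∀ (A B : Type) (f : A → B) (x : M (M A)), mu (map (map f) x) = map f (mu x))
    (epsNat : ∀ (A B : Type) (f : A → B) (x : M A), f (eps x) = eps (map f x))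
    (deltaNat : ∀ (A B : Type) (f : A → B) (x : M A),
      delta (map f x) = map (map f) (delta x))
    -- comonad axioms
    (epsDelta : ∀ (A : Type) (x : M A), eps (delta x) = x)
    :
    ∀ (A : Type) (x : M (M A)),
      mu (map (fun w : M (M A) =>
            map mu (map put (map (fun p : M A => (w, p)) (delta (eps w)))))
          (delta x)) =
        map mu (mu (map (fun z : M (M (M A)) =>
            map put (map (fun p : M A => (map eps z, p)) (eps z)))
          (delta (map delta x)))) := by
  intro A x
  have summand_eq (w : M (M A)) :
      map put (map (fun p : M A => (map eps (map delta w), p)) (eps (map delta w))) =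
        map put (map (fun p : M A => (w, p)) (delta (eps w))) := by
    rw [map_map_of_leftInverse map mapId mapComp (epsDelta A), ← epsNat]
  rw [mu_map_map_comp map mapComp muNat, deltaNat, mapComp]
  simp only [Function.comp_def, summand_eq]

/-- Assuming the functor, monad, comonad, naturality and coherence axioms (but not
flatten-expand itself), the top path of the flatten-expand axiom equals the top path of
its bialgebraic formulation:
`μ ∘ M(M μ) ∘ M(M put) ∘ M strength ∘ M⟨id, δ∘ε⟩ ∘ δ`
equals
`M μ ∘ μ ∘ M(M put) ∘ M strength ∘ M⟨M ε, ε⟩ ∘ δ ∘ M δ`. -/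
theorem flatten_expand_bialgebra_equiv
    (M : Type → Type)
    (map : {A B : Type} → (A → B) → M A → M B)
    (eta : {A : Type} → A → M A)
    (mu : {A : Type} → M (M A) → M A)
    (eps : {A : Type} → M A → A)
    (delta : {A : Type} → M A → M (M A))
    (put : {A : Type} → M A × A → M A)
    -- functor axioms
    (mapId : ∀ (A : Type) (x : M A), map (id : A → A) x = x)
    (mapComp : ∀ (A B C : Type) (f : B → C) (g : A → B) (x : M A),
      map f (map g x) = map (f ∘ g) x)
    -- naturality
    (muNat : ∀ (A B : Type) (f : A → B) (x : M (M A)), mu (map (map f) x) = map f (mu x))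
    (etaNat : ∀ (A B : Type) (f : A → B) (x : A), eta (f x) = map f (eta x))
    (epsNat : ∀ (A B : Type) (f : A → B) (x : M A), f (eps x) = eps (map f x))
    (deltaNat : ∀ (A B : Type) (f : A → B) (x : M A),
      delta (map f x) = map (map f) (delta x))
    (putNat : ∀ (A B : Type) (f : A → B) (l : M A) (a : A),
      map f (put (l, a)) = put (map f l, f a))
    -- monad axioms
    (muAssoc : ∀ (A : Type) (x : M (M (M A))), mu (mu x) = mu (map mu x))
    (muEta : ∀ (A : Type) (x : M A), mu (eta x) = x)
    (muMapEta : ∀ (A : Type) (x : M A), mu (map eta x) = x)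
    -- comonad axioms
    (deltaAssoc : ∀ (A : Type) (x : M A), delta (delta x) = map delta (delta x))
    (epsDelta : ∀ (A : Type) (x : M A), eps (delta x) = x)
    (mapEpsDelta : ∀ (A : Type) (x : M A), map eps (delta x) = x)
    -- coherence axioms
    (flattenExtract : ∀ (A : Type) (x : M (M A)), eps (mu x) = eps (eps x))
    (singletonExpand : ∀ (A : Type) (x : A), delta (eta x) = map eta (eta x))
    (singletonExtract : ∀ (A : Type) (x : A), eps (eta x) = x)
    (getPut : ∀ (A : Type) (l : M A), put (l, eps l) = l)
    (putGet : ∀ (A : Type) (l : M A) (a : A), eps (put (l, a)) = a)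
    (putPut : ∀ (A : Type) (l : M A) (a b : A), put (put (l, a), b) = put (l, b))
    (putAssoc : ∀ (A : Type) (x : M (M A)) (y : M A) (z : A),
      put (mu (put (x, y)), z) = mu (put (x, put (y, z))))
    (singletonPut : ∀ (A : Type) (x y : A), put (eta x, y) = eta y)
    :
    ∀ (A : Type) (x : M (M A)),
      mu (map (fun w : M (M A) =>
            map mu (map put (map (fun p : M A => (w, p)) (delta (eps w)))))
          (delta x)) =
        map mu (mu (map (fun z : M (M (M A)) =>
            map put (map (fun p : M A => (map eps z, p)) (eps z)))
          (delta (map delta x)))) :=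
  flatten_expand_bialgebra_equiv_general M map mu eps delta put mapId mapComp muNat epsNat deltaNat
    epsDelta
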